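/- Suppose in addition that the edge weight function h is a metric on S and that 0 < α ≤ 1. Fix an integer constant M ≥ 1 and let J_n = max over integers k with n^M ≤ k < (n+1)^M of |TSP_k − TSP_{n^M}|. Then there is a constant D > 0 such that for all n sufficiently large, E[J_n / n^{M(1−α/2)}] ≤ D/n^{1−α/2} and E[(J_n / n^{M(1−α/2)})²] ≤ D/n^{2−α}. -/

import Mathlib

open MeasureTheory ProbabilityTheory Real Filter

noncomputable section

abbrev EucPlane : Type := EuclideanSpace ℝ (Fin 2)

def unitSq : Set EucPlane := {x | x 0 ∈ Set.Icc (0:ℝ) 1 ∧ x 1 ∈ Set.Icc (0:ℝ) 1}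

/-- Weight of the spanning cycle determined by the cyclic order `σ 0, σ 1, …, σ (n-1)`. -/
noncomputable def cycleWeight (h : EucPlane → EucPlane → ℝ) (α : ℝ) {n : ℕ}
    (X : Fin n → EucPlane) (σ : Equiv.Perm (Fin n)) : ℝ :=
  ∑ i : Fin n, h (X (σ i)) (X (σ (finRotate n i))) ^ α

/-- Minimum weight of a spanning (Hamiltonian) cycle on the nodes `X 0, …, X (n-1)`. -/
noncomputable def tsp (h : EucPlane → EucPlane → ℝ) (α : ℝ) {n : ℕ}
    (X : Fin n → EucPlane) : ℝ :=
  ⨅ σ : Equiv.Perm (Fin n), cycleWeight h α X σ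

/-- `TSP_n`, the TSP weight of the first `n` random nodes. -/
noncomputable def tspRV {Ω : Type} (h : EucPlane → EucPlane → ℝ) (α : ℝ)
    (X : ℕ → Ω → EucPlane) (n : ℕ) (ω : Ω) : ℝ :=
  tsp h α (fun i : Fin n => X i.val ω)

/-- `J_n = max_{n^M ≤ k < (n+1)^M} |TSP_k - TSP_{n^M}|`. -/
noncomputable def Jmax {Ω : Type} (h : EucPlane → EucPlane → ℝ) (α : ℝ)
    (X : ℕ → Ω → EucPlane) (M n : ℕ) (ω : Ω) : ℝ :=
  ⨆ k ∈ Finset.Ico (n ^ M) ((n + 1) ^ M), |tspRV h α X k ω - tspRV h α X (n ^ M) ω|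

/-!
The bound on `J_n` is deterministic once all points lie in the square, which holds almost
surely. Since `h` is a metric and `α ≤ 1`, `h ^ α` again satisfies the triangle inequality;
hence adding points never shortens the optimal tour (shortcut the new point), and inserting a
point `p` next to a point `q` of a tour costs at most `h q p ^ α + h p q ^ α`. Insert the
`r = k - n ^ M` new points one after another in the order of a sweep through horizontal strips
of height about `r ^ (-1/2)`: the sweep has Euclidean length `O(√r)`, so by Hölder the
insertions cost `O(r ^ (1 - α / 2))`. As `r < (n + 1) ^ M - n ^ M ≤ M 2 ^ M n ^ (M - 1)`, this
gives `J_n / n ^ (M (1 - α / 2)) ≤ K / n ^ (1 - α / 2)` for a constant `K`, and both moments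
follow.
-/

lemma rpow_triangle {S : Set EucPlane} {h : EucPlane → EucPlane → ℝ} {α : ℝ} (hα : 0 < α)
    (hα1 : α ≤ 1) (hnn : ∀ x ∈ S, ∀ y ∈ S, 0 ≤ h x y)
    (htri : ∀ x ∈ S, ∀ y ∈ S, ∀ z ∈ S, h x z ≤ h x y + h y z) :
    ∀ x ∈ S, ∀ y ∈ S, ∀ z ∈ S, h x z ^ α ≤ h x y ^ α + h y z ^ α :=
  fun x hx y hy z hz =>
    (Real.rpow_le_rpow (hnn x hx z hz) (htri x hx y hy z hz) hα.le).trans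
      (Real.rpow_add_le_add_rpow (hnn x hx y hy) (hnn y hy z hz) hα.le hα1)

lemma sum_rpow_le_card_rpow_mul_rpow_sum {ι : Type*} (s : Finset ι) {a : ι → ℝ}
    (ha : ∀ i ∈ s, 0 ≤ a i) {α : ℝ} (hα : 0 < α) (hα1 : α ≤ 1) :
    ∑ i ∈ s, a i ^ α ≤ (s.card : ℝ) ^ (1 - α) * (∑ i ∈ s, a i) ^ α := by
  have hpow : ∀ i ∈ s, (a i ^ α) ^ α⁻¹ = a i := fun i hi => by
    rw [← Real.rpow_mul (ha i hi), mul_inv_cancel₀ hα.ne', Real.rpow_one]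
  have hholder := Real.rpow_sum_le_const_mul_sum_rpow_of_nonneg s (one_le_inv₀ hα |>.mpr hα1)
    (fun i hi => Real.rpow_nonneg (ha i hi) α)
  rw [Finset.sum_congr rfl hpow] at hholder
  have hsum : 0 ≤ ∑ i ∈ s, a i ^ α :=
    Finset.sum_nonneg fun i hi => Real.rpow_nonneg (ha i hi) α
  calc ∑ i ∈ s, a i ^ α = ((∑ i ∈ s, a i ^ α) ^ α⁻¹) ^ α := by
        rw [← Real.rpow_mul hsum, inv_mul_cancel₀ hα.ne', Real.rpow_one]
    _ ≤ ((s.card : ℝ) ^ (α⁻¹ - 1) * ∑ i ∈ s, a i) ^ α := by gcongr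
    _ = (s.card : ℝ) ^ (1 - α) * (∑ i ∈ s, a i) ^ α := by
        rw [Real.mul_rpow (by positivity) (Finset.sum_nonneg ha), ← Real.rpow_mul (by positivity)]
        congr 2
        field_simp

lemma exists_rotate_apply_last {k : ℕ} (σ : Equiv.Perm (Fin (k + 1))) (q : Fin (k + 1)) :
    ∃ t : ℕ, ((finRotate (k + 1) ^ t).trans σ) (Fin.last k) = q := by
  rcases k with _ | k
  · exact ⟨0, Fin.ext (by omega)⟩
  · have hmem : ∀ x, finRotate (k + 2) x ≠ x := fun x =>
      Equiv.Perm.mem_support.mp (by simp [support_finRotate])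
    obtain ⟨t, ht⟩ :=
      isCycle_finRotate.exists_pow_eq (hmem (Fin.last (k + 1))) (hmem (σ.symm q))
    exact ⟨t, by simp [ht]⟩

lemma exists_perm_castSucc_of_apply_last {k : ℕ} (σ : Equiv.Perm (Fin (k + 1)))
    (hσ : σ (Fin.last k) = Fin.last k) :
    ∃ τ : Equiv.Perm (Fin k), ∀ i, σ i.castSucc = (τ i).castSucc := by
  set e : Equiv.Perm (Option (Fin k)) := finSuccEquivLast.symm.trans (σ.trans finSuccEquivLast)
  refine ⟨Equiv.removeNone e, fun i => finSuccEquivLast.injective ?_⟩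
  have hsome : e (some i) ≠ none := by
    intro hnone
    have : σ i.castSucc = σ (Fin.last k) := by
      rw [hσ, ← finSuccEquivLast.apply_eq_iff_eq, finSuccEquivLast_last]
      simpa [e, finSuccEquivLast_symm_some] using hnone
    exact (Fin.castSucc_lt_last i).ne (σ.injective this)
  obtain ⟨x, hx⟩ := Option.ne_none_iff_exists'.mp hsome
  rw [finSuccEquivLast_castSucc, Equiv.removeNone_some e ⟨x, hx⟩]
  simp [e, finSuccEquivLast_symm_some]

lemma exists_perm_extend_castSucc {k : ℕ} (τ : Equiv.Perm (Fin k)) :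
    ∃ σ : Equiv.Perm (Fin (k + 1)),
      σ (Fin.last k) = Fin.last k ∧ ∀ i, σ i.castSucc = (τ i).castSucc :=
  ⟨finSuccEquivLast.trans (τ.optionCongr.trans finSuccEquivLast.symm),
    by simp [finSuccEquivLast_symm_some]⟩

section CycleWeight

variable (h : EucPlane → EucPlane → ℝ) (α : ℝ)

lemma tsp_le_cycleWeight {n : ℕ} (X : Fin n → EucPlane) (σ : Equiv.Perm (Fin n)) :
    tsp h α X ≤ cycleWeight h α X σ :=
  ciInf_le (Set.finite_range _).bddBelow σ

lemma tsp_comp_perm {n : ℕ} (X : Fin n → EucPlane) (e : Equiv.Perm (Fin n)) :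
    tsp h α (X ∘ e) = tsp h α X := by
  have hcomp : ∀ σ : Equiv.Perm (Fin n),
      cycleWeight h α (X ∘ e) σ = cycleWeight h α X (σ.trans e) := fun σ => rfl
  simp only [tsp, hcomp]
  exact (Equiv.mulLeft e).iInf_congr fun σ => rfl

lemma cycleWeight_rotate {n : ℕ} (X : Fin n → EucPlane) (σ : Equiv.Perm (Fin n)) (t : ℕ) :
    cycleWeight h α X ((finRotate n ^ t).trans σ) = cycleWeight h α X σ := by
  have hcomm : ∀ i, (finRotate n ^ t) (finRotate n i) = finRotate n ((finRotate n ^ t) i) :=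
    fun i => congrArg (· i) ((Commute.refl (finRotate n)).pow_left t).eq
  unfold cycleWeight
  simp only [Equiv.trans_apply, hcomm]
  exact Equiv.sum_comp (finRotate n ^ t) fun i => h (X (σ i)) (X (σ (finRotate n i))) ^ α

lemma cycleWeight_succ {k : ℕ} (X : Fin (k + 1) → EucPlane) (σ : Equiv.Perm (Fin (k + 1))) :
    cycleWeight h α X σ = ∑ j : Fin k, h (X (σ j.castSucc)) (X (σ j.succ)) ^ α
      + h (X (σ (Fin.last k))) (X (σ 0)) ^ α := by
  simp [cycleWeight, Fin.sum_univ_castSucc, Fin.coeSucc_eq_succ]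

-- `σ` is the tour `τ` with its edge from `Y (τ (last k))` to `Y (τ 0)` replaced by a detour
-- through `p`.
lemma cycleWeight_snoc_add {k : ℕ} (Y : Fin (k + 1) → EucPlane) (p : EucPlane)
    (τ : Equiv.Perm (Fin (k + 1))) (σ : Equiv.Perm (Fin (k + 2)))
    (hlast : σ (Fin.last _) = Fin.last _) (hcast : ∀ i, σ i.castSucc = (τ i).castSucc) :
    cycleWeight h α (Fin.snoc Y p) σ + h (Y (τ (Fin.last k))) (Y (τ 0)) ^ α
      = cycleWeight h α Y τ + h (Y (τ (Fin.last k))) p ^ α + h p (Y (τ 0)) ^ α := by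
  have hzero : σ 0 = (τ 0).castSucc := by simpa using hcast 0
  rw [cycleWeight_succ, cycleWeight_succ, Fin.sum_univ_castSucc]
  simp only [Fin.succ_castSucc, Fin.succ_last, hcast, hlast, hzero, Fin.snoc_castSucc,
    Fin.snoc_last]
  ring

end CycleWeight

section Insertion
variable (h : EucPlane → EucPlane → ℝ) (α : ℝ) {S : Set EucPlane}
  (htri : ∀ a ∈ S, ∀ b ∈ S, ∀ c ∈ S, h a c ^ α ≤ h a b ^ α + h b c ^ α)
include htri

lemma tsp_le_tsp_snoc {k : ℕ} {Y : Fin (k + 1) → EucPlane} {p : EucPlane}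
    (hY : ∀ i, Y i ∈ S) (hp : p ∈ S) : tsp h α Y ≤ tsp h α (Fin.snoc Y p) := by
  refine le_ciInf fun σ₀ => ?_
  -- rotate the tour so that it visits `p` last, then shortcut `p`
  obtain ⟨t, hlast⟩ := exists_rotate_apply_last σ₀ (Fin.last _)
  set σ := (finRotate _ ^ t).trans σ₀
  obtain ⟨τ, hcast⟩ := exists_perm_castSucc_of_apply_last σ hlast
  have hid := cycleWeight_snoc_add h α Y p τ σ hlast hcast
  have hshort := htri _ (hY (τ (Fin.last k))) _ hp _ (hY (τ 0))
  calc tsp h α Y ≤ cycleWeight h α Y τ := tsp_le_cycleWeight h α Y τ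
    _ ≤ cycleWeight h α (Fin.snoc Y p) σ := by linarith
    _ = cycleWeight h α (Fin.snoc Y p) σ₀ := cycleWeight_rotate h α _ σ₀ t

lemma tsp_snoc_le {k : ℕ} {Y : Fin (k + 1) → EucPlane} {p : EucPlane}
    (hY : ∀ i, Y i ∈ S) (hp : p ∈ S) (q : Fin (k + 1)) :
    tsp h α (Fin.snoc Y p) ≤ tsp h α Y + h (Y q) p ^ α + h p (Y q) ^ α := by
  suffices tsp h α (Fin.snoc Y p) - (h (Y q) p ^ α + h p (Y q) ^ α) ≤ tsp h α Y by linarith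
  refine le_ciInf fun τ₀ => ?_
  -- rotate the tour so that it visits `Y q` last, then visit `p` right after it
  obtain ⟨t, hlast⟩ := exists_rotate_apply_last τ₀ q
  set τ := (finRotate _ ^ t).trans τ₀
  obtain ⟨σ, hσ, hcast⟩ := exists_perm_extend_castSucc τ
  have hid := cycleWeight_snoc_add h α Y p τ σ hσ hcast
  have hdetour := htri _ hp _ (hY q) _ (hY (τ 0))
  have hrot := cycleWeight_rotate h α Y τ₀ t
  have hσle := tsp_le_cycleWeight h α (Fin.snoc Y p) σ
  rw [hlast] at hid
  linarith

end Insertion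

def tspPrefix (h : EucPlane → EucPlane → ℝ) (α : ℝ) (x : ℕ → EucPlane) (n : ℕ) :
    ℝ :=
  tsp h α (fun i : Fin n => x i)

section Prefix
variable (h : EucPlane → EucPlane → ℝ) (α : ℝ)

lemma tspPrefix_succ (x : ℕ → EucPlane) (n : ℕ) :
    tspPrefix h α x (n + 1) = tsp h α (Fin.snoc (fun i : Fin n => x i) (x n)) :=
  congrArg (tsp h α) (Fin.snoc_init_self (fun i : Fin (n + 1) => x i)).symm

lemma tspPrefix_eq_of_perm {x y : ℕ → EucPlane} {n : ℕ} (e : Equiv.Perm (Fin n))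
    (hxy : ∀ i : Fin n, y i = x (e i)) : tspPrefix h α y n = tspPrefix h α x n := by
  have : (fun i : Fin n => y i) = (fun i : Fin n => x i) ∘ e := funext hxy
  rw [tspPrefix, this, tsp_comp_perm, tspPrefix]

lemma exists_tspPrefix_eq_reorder {S : Set EucPlane} {x : ℕ → EucPlane} (hx : ∀ i, x i ∈ S)
    (m r : ℕ) (e : Equiv.Perm (Fin r)) :
    ∃ y : ℕ → EucPlane, (∀ i, y i ∈ S) ∧ tspPrefix h α y m = tspPrefix h α x m ∧
      tspPrefix h α y (m + r) = tspPrefix h α x (m + r) ∧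
      ∀ t : Fin r, y (m + t) = x (m + e t) := by
  set E : Equiv.Perm (Fin (m + r)) := finSumFinEquiv.permCongr (Equiv.sumCongr (.refl _) e)
  set y : ℕ → EucPlane := fun j => if hj : j < m + r then x (E ⟨j, hj⟩) else x j
  have hy : ∀ i : Fin (m + r), y i = x (E i) := fun i => dif_pos i.isLt
  refine ⟨y, fun j => ?_, ?_, tspPrefix_eq_of_perm h α E hy, fun t => ?_⟩
  · by_cases hj : j < m + r <;> simp [y, hj, hx]
  · refine congrArg (tsp h α) (funext fun i : Fin m => ?_)
    simpa [E, Equiv.permCongr_apply] using hy (Fin.castAdd r i)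
  · simpa [E, Equiv.permCongr_apply] using hy (Fin.natAdd m t)

variable {α} {S : Set EucPlane}
  (htri : ∀ a ∈ S, ∀ b ∈ S, ∀ c ∈ S, h a c ^ α ≤ h a b ^ α + h b c ^ α)
  {x : ℕ → EucPlane} (hx : ∀ i, x i ∈ S)
include htri hx

lemma tspPrefix_mono {m k : ℕ} (hm : 1 ≤ m) (hmk : m ≤ k) :
    tspPrefix h α x m ≤ tspPrefix h α x k := by
  induction k, hmk using Nat.le_induction with
  | base => rfl
  | succ k hmk ih =>
    obtain ⟨k, rfl⟩ : ∃ j, k = j + 1 := ⟨k - 1, by omega⟩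
    rw [tspPrefix_succ]
    exact ih.trans (tsp_le_tsp_snoc h α htri (fun i => hx i) (hx _))

lemma tspPrefix_succ_le {n q : ℕ} (hq : q < n) :
    tspPrefix h α x (n + 1) ≤ tspPrefix h α x n + h (x q) (x n) ^ α + h (x n) (x q) ^ α := by
  obtain ⟨n, rfl⟩ : ∃ j, n = j + 1 := ⟨n - 1, by omega⟩
  rw [tspPrefix_succ]
  exact tsp_snoc_le h α htri (fun i => hx i) (hx _) ⟨q, hq⟩

lemma tspPrefix_add_le {m : ℕ} (hm : 1 ≤ m) (r : ℕ) :
    tspPrefix h α x (m + r) ≤ tspPrefix h α x m + ∑ t ∈ Finset.range r,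
      (h (x (m + t - 1)) (x (m + t)) ^ α + h (x (m + t)) (x (m + t - 1)) ^ α) := by
  induction r with
  | zero => simp
  | succ r ih =>
    have := tspPrefix_succ_le h htri hx (n := m + r) (q := m + r - 1) (by omega)
    rw [Finset.sum_range_succ, ← add_assoc m]
    linarith

end Prefix

lemma dist_le_abs_sub_add_abs_sub (p q : EucPlane) : dist p q ≤ |p 0 - q 0| + |p 1 - q 1| := by
  rw [EuclideanSpace.dist_eq, Fin.sum_univ_two, Real.dist_eq, Real.dist_eq, sq_abs, sq_abs]
  refine Real.sqrt_le_iff.mpr ⟨by positivity, ?_⟩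
  nlinarith [sq_abs (p 0 - q 0), sq_abs (p 1 - q 1), abs_nonneg (p 0 - q 0),
    abs_nonneg (p 1 - q 1)]

-- Sorting by `stripKey m` sweeps the horizontal strips `{⌊m y₁⌋ = g}` upwards, each from left
-- to right; the factor `2` puts every point of a higher strip after all points of a lower one.
-- The strip index of a point with `y₁ = 1` is `m`, an extra degenerate strip.
def stripKey (m : ℕ) (y : EucPlane) : ℝ := 2 * ⌊y 1 * m⌋₊ + y 0

section StripKey
variable {m : ℕ}

lemma stripKey_nonneg {y : EucPlane} (hy : y ∈ unitSq) : 0 ≤ stripKey m y := by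
  have := hy.1.1
  unfold stripKey
  positivity

lemma stripKey_le {y : EucPlane} (hy : y ∈ unitSq) : stripKey m y ≤ 2 * m + 1 := by
  obtain ⟨⟨-, hy0⟩, hy1, hy1'⟩ := hy
  have : (⌊y 1 * m⌋₊ : ℝ) ≤ m :=
    (Nat.floor_le (by positivity)).trans (mul_le_of_le_one_left (Nat.cast_nonneg m) hy1')
  unfold stripKey
  linarith

lemma dist_le_stripKey_sub (hm : 1 ≤ m) {p q : EucPlane} (hp : p ∈ unitSq) (hq : q ∈ unitSq)
    (hpq : stripKey m p ≤ stripKey m q) :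
    dist p q ≤ 2 * (stripKey m q - stripKey m p) + 2 / m := by
  obtain ⟨⟨hp0, hp0'⟩, hp1, -⟩ := hp
  obtain ⟨⟨hq0, hq0'⟩, hq1, -⟩ := hq
  have hmR : (1 : ℝ) ≤ m := by exact_mod_cast hm
  have hgp := Nat.floor_le (a := p 1 * m) (by positivity)
  have hgp' := Nat.lt_floor_add_one (p 1 * m)
  have hgq := Nat.floor_le (a := q 1 * m) (by positivity)
  have hgq' := Nat.lt_floor_add_one (q 1 * m)
  set gp := ⌊p 1 * m⌋₊
  set gq := ⌊q 1 * m⌋₊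
  set Δ := stripKey m q - stripKey m p
  have hΔ : Δ = 2 * ((gq : ℝ) - gp) + (q 0 - p 0) := by
    simp only [Δ, stripKey]; ring
  have hg : (gp : ℝ) ≤ gq := by
    by_contra! hlt
    have : (gq : ℝ) + 1 ≤ gp := by exact_mod_cast Nat.add_one_le_of_lt (by exact_mod_cast hlt)
    linarith
  have hx : |p 0 - q 0| ≤ Δ := by
    rcases hg.eq_or_lt with heq | hlt
    · rw [abs_le]; constructor <;> linarith
    · have : (gp : ℝ) + 1 ≤ gq := by
        exact_mod_cast Nat.add_one_le_of_lt (by exact_mod_cast hlt)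
      rw [abs_le]; constructor <;> linarith
  have hy : |p 1 - q 1| ≤ Δ + 2 / m := by
    have hmul : |p 1 - q 1| * m = |p 1 * m - q 1 * m| := by
      rw [← sub_mul, abs_mul, abs_of_pos (by linarith : (0 : ℝ) < m)]
    have : |p 1 - q 1| * m ≤ Δ + 2 := by
      rw [hmul, abs_le]; constructor <;> linarith
    calc |p 1 - q 1| ≤ (Δ + 2) / m := (le_div_iff₀ (by linarith)).mpr this
      _ = Δ / m + 2 / m := add_div _ _ _
      _ ≤ Δ + 2 / m := by gcongr; exact div_le_self (by linarith) hmR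
  linarith [dist_le_abs_sub_add_abs_sub p q]

lemma sum_dist_le_of_monotone_stripKey (hm : 1 ≤ m) {w : ℕ → EucPlane}
    (hw : ∀ t, w t ∈ unitSq) {s : ℕ}
    (hmono : ∀ t < s, stripKey m (w t) ≤ stripKey m (w (t + 1))) :
    ∑ t ∈ Finset.range s, dist (w t) (w (t + 1)) ≤ 2 * (2 * m + 1) + 2 * s / m := by
  calc ∑ t ∈ Finset.range s, dist (w t) (w (t + 1))
      ≤ ∑ t ∈ Finset.range s, (2 * (stripKey m (w (t + 1)) - stripKey m (w t)) + 2 / m) :=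
        Finset.sum_le_sum fun t ht =>
          dist_le_stripKey_sub hm (hw t) (hw _) (hmono t (Finset.mem_range.mp ht))
    _ = 2 * (stripKey m (w s) - stripKey m (w 0)) + 2 * s / m := by
        rw [Finset.sum_add_distrib, ← Finset.mul_sum,
          Finset.sum_range_sub (fun t => stripKey m (w t)), Finset.sum_const, Finset.card_range,
          nsmul_eq_mul]
        ring
    _ ≤ 2 * (2 * m + 1) + 2 * s / m := by
        linarith [stripKey_le (m := m) (hw s), stripKey_nonneg (m := m) (hw 0)]

end StripKey

lemma dist_le_two_of_mem_unitSq {p q : EucPlane} (hp : p ∈ unitSq) (hq : q ∈ unitSq) :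
    dist p q ≤ 2 := by
  obtain ⟨⟨hp0, hp0'⟩, hp1, hp1'⟩ := hp
  obtain ⟨⟨hq0, hq0'⟩, hq1, hq1'⟩ := hq
  have h0 : |p 0 - q 0| ≤ 1 := abs_le.mpr ⟨by linarith, by linarith⟩
  have h1 : |p 1 - q 1| ≤ 1 := abs_le.mpr ⟨by linarith, by linarith⟩
  linarith [dist_le_abs_sub_add_abs_sub p q]

-- `⌈√(s + 1)⌉` strips balance the key range `2 m + 1` against the slack `2 / m` per step in
-- `dist_le_stripKey_sub`.
lemma sum_dist_le_sqrt_of_monotone_stripKey {w : ℕ → EucPlane} (hw : ∀ t, w t ∈ unitSq)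
    {s : ℕ} (hmono : ∀ t < s,
      stripKey ⌈√(s + 1 : ℝ)⌉₊ (w t) ≤ stripKey ⌈√(s + 1 : ℝ)⌉₊ (w (t + 1))) :
    ∑ t ∈ Finset.range s, dist (w t) (w (t + 1)) ≤ 12 * √(s + 1 : ℝ) := by
  set K := ⌈√(s + 1 : ℝ)⌉₊
  have hsqrt : 1 ≤ √(s + 1 : ℝ) := Real.one_le_sqrt.mpr (by simp)
  have hK : √(s + 1 : ℝ) ≤ K := Nat.le_ceil _
  have hK' : (K : ℝ) < √(s + 1 : ℝ) + 1 := Nat.ceil_lt_add_one (by positivity)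
  have hK1 : 1 ≤ K := by exact_mod_cast hsqrt.trans hK
  have hs : 2 * s / K ≤ 2 * √(s + 1 : ℝ) := by
    rw [div_le_iff₀ (by linarith)]
    have := Real.mul_self_sqrt (by positivity : (0 : ℝ) ≤ s + 1)
    nlinarith
  linarith [sum_dist_le_of_monotone_stripKey hK1 hw hmono]

section Upper
variable {h : EucPlane → EucPlane → ℝ} {α c : ℝ} (hα : 0 < α) (hα1 : α ≤ 1)
  {S : Set EucPlane} (hnn : ∀ x ∈ S, ∀ y ∈ S, 0 ≤ h x y)
  (htri : ∀ x ∈ S, ∀ y ∈ S, ∀ z ∈ S, h x z ≤ h x y + h y z)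
  (hc : 0 ≤ c) (hle : ∀ x ∈ S, ∀ y ∈ S, h x y ≤ c * dist x y)
  {x : ℕ → EucPlane} (hx : ∀ i, x i ∈ S)
include hα hα1 hnn htri hc hle hx

lemma tspPrefix_add_le_sum_dist {m : ℕ} (hm : 1 ≤ m) (r : ℕ) :
    tspPrefix h α x (m + r) ≤ tspPrefix h α x m
      + 2 * c ^ α * r ^ (1 - α)
        * (∑ t ∈ Finset.range r, dist (x (m + t - 1)) (x (m + t))) ^ α := by
  have hedge : ∀ i j, h (x i) (x j) ^ α ≤ c ^ α * dist (x i) (x j) ^ α := fun i j => by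
    rw [← Real.mul_rpow hc dist_nonneg]
    exact Real.rpow_le_rpow (hnn _ (hx i) _ (hx j)) (hle _ (hx i) _ (hx j)) hα.le
  have hholder := sum_rpow_le_card_rpow_mul_rpow_sum (Finset.range r)
    (a := fun t => dist (x (m + t - 1)) (x (m + t))) (fun _ _ => dist_nonneg) hα hα1
  rw [Finset.card_range] at hholder
  calc tspPrefix h α x (m + r)
      ≤ tspPrefix h α x m + ∑ t ∈ Finset.range r,
          (h (x (m + t - 1)) (x (m + t)) ^ α + h (x (m + t)) (x (m + t - 1)) ^ α) :=
        tspPrefix_add_le h (rpow_triangle hα hα1 hnn htri) hx hm r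
    _ ≤ tspPrefix h α x m
          + ∑ t ∈ Finset.range r, 2 * c ^ α * dist (x (m + t - 1)) (x (m + t)) ^ α := by
        gcongr with t
        have hback := hedge (m + t) (m + t - 1)
        rw [dist_comm] at hback
        linarith [hedge (m + t - 1) (m + t)]
    _ ≤ _ := by
        rw [← Finset.mul_sum, mul_assoc (2 * c ^ α)]
        gcongr

end Upper

lemma mul_add_one_pow_sub_pow_le {x : ℝ} (hx : 0 ≤ x) (M : ℕ) :
    x * ((x + 1) ^ M - x ^ M) ≤ M * (x + 1) ^ M := by
  induction M with
  | zero => simp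
  | succ M ih =>
    have hpow : x ^ M ≤ (x + 1) ^ M := pow_le_pow_left₀ hx (by linarith) M
    have hpos : 0 ≤ x ^ M := pow_nonneg hx M
    push_cast
    rw [pow_succ, pow_succ]
    nlinarith

lemma natCast_sub_pow_le_of_mem_Ico {n M k : ℕ} (hn : 1 ≤ n)
    (hk : k ∈ Finset.Ico (n ^ M) ((n + 1) ^ M)) :
    ((k - n ^ M : ℕ) : ℝ) ≤ M * 2 ^ M * n ^ M / n := by
  obtain ⟨hlo, hhi⟩ := Finset.mem_Ico.mp hk
  have hnR : (1 : ℝ) ≤ n := by exact_mod_cast hn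
  have hhiR : (k : ℝ) + 1 ≤ (n + 1) ^ M := by exact_mod_cast hhi
  have hdouble : ((n : ℝ) + 1) ^ M ≤ 2 ^ M * n ^ M := by
    rw [← mul_pow]; exact pow_le_pow_left₀ (by positivity) (by linarith) M
  have := mul_add_one_pow_sub_pow_le (Nat.cast_nonneg n) M
  rw [Nat.cast_sub hlo, le_div_iff₀ (by positivity)]
  push_cast
  nlinarith

lemma ae_mem_of_map_eq_withDensity_restrict {Ω E : Type*} [MeasurableSpace Ω]
    [MeasurableSpace E] {P : Measure Ω} {μ : Measure E} {S : Set E} (hS : MeasurableSet S)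
    {Y : Ω → E} (hY : Measurable Y) {g : E → ENNReal}
    (hlaw : P.map Y = (μ.restrict S).withDensity g) :
    ∀ᵐ ω ∂P, Y ω ∈ S := by
  refine ae_of_ae_map hY.aemeasurable ?_
  rw [hlaw]
  exact (withDensity_absolutelyContinuous _ _).ae_le (ae_restrict_mem hS)

lemma measurableSet_unitSq : MeasurableSet unitSq :=
  (measurableSet_Icc.preimage (by fun_prop)).inter (measurableSet_Icc.preimage (by fun_prop))

section Jmax
variable {Ω : Type} {h : EucPlane → EucPlane → ℝ} {α : ℝ} {X : ℕ → Ω → EucPlane} {M n : ℕ}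
  {ω : Ω}

lemma Jmax_nonneg : 0 ≤ Jmax h α X M n ω :=
  Real.iSup_nonneg fun _ => Real.iSup_nonneg fun _ => abs_nonneg _

lemma Jmax_le {B : ℝ} (hB : 0 ≤ B)
    (hk : ∀ k ∈ Finset.Ico (n ^ M) ((n + 1) ^ M),
      |tspRV h α X k ω - tspRV h α X (n ^ M) ω| ≤ B) :
    Jmax h α X M n ω ≤ B :=
  Real.iSup_le (fun k => Real.iSup_le (hk k) hB) hB

end Jmax

section UnitSquare
variable {h : EucPlane → EucPlane → ℝ} {α c : ℝ} (hα : 0 < α) (hα1 : α ≤ 1)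
  (hnn : ∀ x ∈ unitSq, ∀ y ∈ unitSq, 0 ≤ h x y)
  (htri : ∀ x ∈ unitSq, ∀ y ∈ unitSq, ∀ z ∈ unitSq, h x z ≤ h x y + h y z)
  (hc : 0 ≤ c) (hle : ∀ x ∈ unitSq, ∀ y ∈ unitSq, h x y ≤ c * dist x y)
include hα hα1 hnn htri hc hle

lemma tspPrefix_add_le_rpow {x : ℕ → EucPlane} (hx : ∀ i, x i ∈ unitSq) {m : ℕ} (hm : 1 ≤ m)
    (r : ℕ) :
    tspPrefix h α x (m + r) ≤ tspPrefix h α x m + 2 * (14 * c) ^ α * r ^ (1 - α / 2) := by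
  rcases Nat.eq_zero_or_pos r with rfl | hr0
  · simp [Real.zero_rpow (by linarith : 1 - α / 2 ≠ 0)]
  obtain ⟨s, rfl⟩ : ∃ s, r = s + 1 := ⟨r - 1, by omega⟩
  set K := ⌈√(s + 1 : ℝ)⌉₊
  obtain ⟨y, hy, hym, hyr, hyt⟩ := exists_tspPrefix_eq_reorder h α hx m (s + 1)
    (Tuple.sort fun t : Fin (s + 1) => stripKey K (x (m + t)))
  have hmono : ∀ t < s, stripKey K (y (m + t)) ≤ stripKey K (y (m + (t + 1))) := by
    intro t ht
    have := Tuple.monotone_sort (fun t : Fin (s + 1) => stripKey K (x (m + t)))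
      (show (⟨t, by omega⟩ : Fin (s + 1)) ≤ ⟨t + 1, by omega⟩ from Nat.le_succ t)
    simpa [← hyt] using this
  have hpath : ∑ t ∈ Finset.range (s + 1), dist (y (m + t - 1)) (y (m + t))
      ≤ 14 * √(s + 1 : ℝ) := by
    have hlink := dist_le_two_of_mem_unitSq (hy (m - 1)) (hy m)
    have htail :=
      sum_dist_le_sqrt_of_monotone_stripKey (w := fun t => y (m + t)) (fun t => hy _) hmono
    have hsqrt : 1 ≤ √(s + 1 : ℝ) := Real.one_le_sqrt.mpr (by simp)
    rw [Finset.sum_range_succ']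
    simp only [add_zero, ← add_assoc, Nat.add_sub_cancel] at htail ⊢
    linarith
  have hs : (0 : ℝ) < s + 1 := by positivity
  calc tspPrefix h α x (m + (s + 1)) = tspPrefix h α y (m + (s + 1)) := hyr.symm
    _ ≤ tspPrefix h α y m + 2 * c ^ α * ((s + 1 : ℕ) : ℝ) ^ (1 - α)
          * (∑ t ∈ Finset.range (s + 1), dist (y (m + t - 1)) (y (m + t))) ^ α :=
        tspPrefix_add_le_sum_dist hα hα1 hnn htri hc hle hy hm _
    _ ≤ tspPrefix h α x m
          + 2 * c ^ α * ((s + 1 : ℕ) : ℝ) ^ (1 - α) * (14 * √(s + 1 : ℝ)) ^ α := by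
        rw [hym]; gcongr
    _ = tspPrefix h α x m + 2 * (14 * c) ^ α * ((s + 1 : ℕ) : ℝ) ^ (1 - α / 2) := by
        rw [Real.sqrt_eq_rpow, Real.mul_rpow (by norm_num) (by positivity),
          Real.mul_rpow (by norm_num) hc, ← Real.rpow_mul hs.le]
        push_cast
        rw [show 1 - α / 2 = (1 - α) + 1 / 2 * α by ring, Real.rpow_add hs]
        ring

lemma Jmax_div_le {Ω : Type} {X : ℕ → Ω → EucPlane} {M n : ℕ} {ω : Ω}
    (hω : ∀ i, X i ω ∈ unitSq) (hn : 1 ≤ n) :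
    Jmax h α X M n ω / (n : ℝ) ^ ((M : ℝ) * (1 - α / 2))
      ≤ 2 * (14 * c) ^ α * (M * 2 ^ M) ^ (1 - α / 2) / (n : ℝ) ^ (1 - α / 2) := by
  have hnR : (0 : ℝ) < n := by exact_mod_cast hn
  have hm : 1 ≤ n ^ M := Nat.one_le_pow _ _ hn
  have hβ : 0 ≤ 1 - α / 2 := by linarith
  have hJ : Jmax h α X M n ω ≤ 2 * (14 * c) ^ α * (M * 2 ^ M * n ^ M / n) ^ (1 - α / 2) := by
    refine Jmax_le (by positivity) fun k hk => ?_
    have hk' := Finset.mem_Ico.mp hk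
    have hmono := tspPrefix_mono h (rpow_triangle hα hα1 hnn htri) hω hm hk'.1
    have hup := tspPrefix_add_le_rpow hα hα1 hnn htri hc hle hω hm (k - n ^ M)
    rw [Nat.add_sub_cancel' hk'.1] at hup
    have hgap := natCast_sub_pow_le_of_mem_Ico hn hk
    change |tspPrefix h α (fun i => X i ω) k - tspPrefix h α (fun i => X i ω) (n ^ M)| ≤ _
    rw [abs_of_nonneg (sub_nonneg.mpr hmono)]
    calc _ ≤ 2 * (14 * c) ^ α * ((k - n ^ M : ℕ) : ℝ) ^ (1 - α / 2) := by linarith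
      _ ≤ _ := by gcongr
  rw [Real.div_rpow (by positivity) hnR.le,
    Real.mul_rpow (x := M * 2 ^ M) (by positivity) (by positivity),
    ← Real.rpow_natCast_mul hnR.le] at hJ
  rw [div_le_div_iff₀ (by positivity) (by positivity)]
  calc Jmax h α X M n ω * (n : ℝ) ^ (1 - α / 2)
      ≤ 2 * (14 * c) ^ α * ((M * 2 ^ M) ^ (1 - α / 2) * (n : ℝ) ^ (M * (1 - α / 2))
          / (n : ℝ) ^ (1 - α / 2)) * (n : ℝ) ^ (1 - α / 2) := by gcongr
    _ = _ := by field_simp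

end UnitSquare

lemma integral_le_of_ae_nonneg_of_ae_le {Ω : Type*} [MeasurableSpace Ω] {P : Measure Ω}
    [IsProbabilityMeasure P] {g : Ω → ℝ} {B : ℝ} (hg : ∀ᵐ ω ∂P, 0 ≤ g ω ∧ g ω ≤ B) :
    ∫ ω, g ω ∂P ≤ B := by
  have hnorm : ∀ᵐ ω ∂P, ‖g ω‖ ≤ B :=
    hg.mono fun ω hω => (Real.norm_of_nonneg hω.1).trans_le hω.2
  calc ∫ ω, g ω ∂P ≤ ‖∫ ω, g ω ∂P‖ := Real.le_norm_self _
    _ ≤ B * P.real Set.univ := norm_integral_le_of_norm_le_const hnorm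
    _ = B := by simp

theorem tsp_block_fluctuation_bounds_metric_general
    {Ω : Type} [MeasurableSpace Ω] (P : Measure Ω) [IsProbabilityMeasure P]
    (f : EucPlane → ℝ)
    (X : ℕ → Ω → EucPlane) (hXmeas : ∀ i, Measurable (X i))
    (hlaw : ∀ i, Measure.map (X i) P
      = (volume.restrict unitSq).withDensity (fun x => ENNReal.ofReal (f x)))
    (h : EucPlane → EucPlane → ℝ) (c1 c2 : ℝ) (hc1 : 0 < c1) (hc12 : c1 ≤ c2)
    (hbound : ∀ x ∈ unitSq, ∀ y ∈ unitSq, c1 * dist x y ≤ h x y ∧ h x y ≤ c2 * dist x y)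
    (htriangle : ∀ x ∈ unitSq, ∀ y ∈ unitSq, ∀ z ∈ unitSq, h x z ≤ h x y + h y z)
    (α : ℝ) (hα : 0 < α) (hα1 : α ≤ 1) (M : ℕ) :
    ∃ D : ℝ, 0 < D ∧ ∃ n0 : ℕ, ∀ n : ℕ, n0 ≤ n →
      (∫ ω, Jmax h α X M n ω / (n : ℝ) ^ ((M : ℝ) * (1 - α / 2)) ∂P)
          ≤ D / (n : ℝ) ^ (1 - α / 2)
        ∧ (∫ ω, (Jmax h α X M n ω / (n : ℝ) ^ ((M : ℝ) * (1 - α / 2))) ^ 2 ∂P)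
          ≤ D / (n : ℝ) ^ (2 - α) := by
  have hc2 : 0 ≤ c2 := hc1.le.trans hc12
  have hnn : ∀ x ∈ unitSq, ∀ y ∈ unitSq, 0 ≤ h x y := fun x hx y hy =>
    (mul_nonneg hc1.le dist_nonneg).trans (hbound x hx y hy).1
  have hae : ∀ᵐ ω ∂P, ∀ i, X i ω ∈ unitSq := ae_all_iff.mpr fun i =>
    ae_mem_of_map_eq_withDensity_restrict measurableSet_unitSq (hXmeas i) (hlaw i)
  set K := 2 * (14 * c2) ^ α * (M * 2 ^ M) ^ (1 - α / 2)
  refine ⟨(K + 1) ^ 2, by positivity, 1, fun n hn => ?_⟩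
  have hnR : (0 : ℝ) < n := by exact_mod_cast hn
  have hJ : ∀ᵐ ω ∂P, 0 ≤ Jmax h α X M n ω / (n : ℝ) ^ ((M : ℝ) * (1 - α / 2))
      ∧ Jmax h α X M n ω / (n : ℝ) ^ ((M : ℝ) * (1 - α / 2)) ≤ K / (n : ℝ) ^ (1 - α / 2) :=
    hae.mono fun ω hω => ⟨div_nonneg Jmax_nonneg (by positivity),
      Jmax_div_le hα hα1 hnn htriangle hc2 (fun x hx y hy => (hbound x hx y hy).2) hω hn⟩
  have hK : 0 ≤ K := by positivity
  constructor
  · calc _ ≤ K / (n : ℝ) ^ (1 - α / 2) := integral_le_of_ae_nonneg_of_ae_le hJ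
      _ ≤ (K + 1) ^ 2 / (n : ℝ) ^ (1 - α / 2) := by gcongr; nlinarith
  · calc _ ≤ (K / (n : ℝ) ^ (1 - α / 2)) ^ 2 :=
          integral_le_of_ae_nonneg_of_ae_le
            (hJ.mono fun ω hω => ⟨sq_nonneg _, pow_le_pow_left₀ hω.1 hω.2 2⟩)
      _ = K ^ 2 / (n : ℝ) ^ (2 - α) := by
          rw [div_pow, ← Real.rpow_mul_natCast hnR.le]; congr 2; push_cast; ring
      _ ≤ (K + 1) ^ 2 / (n : ℝ) ^ (2 - α) := by gcongr; linarith

/-- Moment bounds for the block fluctuation `J_n` when `h` is a metric and `0 < α ≤ 1`. -/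
theorem tsp_block_fluctuation_bounds_metric
    {Ω : Type} [MeasurableSpace Ω] (P : Measure Ω) [IsProbabilityMeasure P]
    (f : EucPlane → ℝ) (ε1 ε2 : ℝ) (hε1 : 0 < ε1) (hε12 : ε1 ≤ ε2)
    (hf : ∀ x ∈ unitSq, ε1 ≤ f x ∧ f x ≤ ε2)
    (X : ℕ → Ω → EucPlane) (hXmeas : ∀ i, Measurable (X i))
    (hindep : iIndepFun X P)
    (hlaw : ∀ i, Measure.map (X i) P
      = (volume.restrict unitSq).withDensity (fun x => ENNReal.ofReal (f x)))
    (h : EucPlane → EucPlane → ℝ) (c1 c2 : ℝ) (hc1 : 0 < c1) (hc12 : c1 ≤ c2)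
    (hsymm : ∀ x y, h x y = h y x)
    (hbound : ∀ x ∈ unitSq, ∀ y ∈ unitSq, c1 * dist x y ≤ h x y ∧ h x y ≤ c2 * dist x y)
    (htriangle : ∀ x ∈ unitSq, ∀ y ∈ unitSq, ∀ z ∈ unitSq, h x z ≤ h x y + h y z)
    (hzero : ∀ x ∈ unitSq, ∀ y ∈ unitSq, (h x y = 0 ↔ x = y))
    (α : ℝ) (hα : 0 < α) (hα1 : α ≤ 1) (M : ℕ) (hM : 1 ≤ M) :
    ∃ D : ℝ, 0 < D ∧ ∃ n0 : ℕ, ∀ n : ℕ, n0 ≤ n →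
      (∫ ω, Jmax h α X M n ω / (n : ℝ) ^ ((M : ℝ) * (1 - α / 2)) ∂P)
          ≤ D / (n : ℝ) ^ (1 - α / 2)
        ∧ (∫ ω, (Jmax h α X M n ω / (n : ℝ) ^ ((M : ℝ) * (1 - α / 2))) ^ 2 ∂P)
          ≤ D / (n : ℝ) ^ (2 - α) :=
  tsp_block_fluctuation_bounds_metric_general P f X hXmeas hlaw h c1 c2 hc1 hc12 hbound htriangle α
    hα hα1 M

end
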